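/- For all natural n ≥ 1, the generalized fibonomial at argument 1/2 satisfies {1/2 choose n}_{s,t} = {1/2}_{s,t} · {2n choose n}_{s,t} · (−1)^{n+1}/(4^{n−1}·⟨n⟩_{s,t}·{2n−1}_{s,t}) · L_{n−1}(s,t), where L_m(s,t) = (−t)^{−m²/2}·4^m / (⟨m⟩_{s,t}! · ∏_{j=0}^{m−1}(φ^{j+1/2} + φ'^{j+1/2})). -/

import Mathlib

noncomputable section
open Real

/-- Generalized Fibonacci function {α} = (φ^α − φ'^α)/(φ−φ'), real powers. -/
def genFibFun (φ φ' α : ℝ) : ℝ := (φ ^ α - φ' ^ α) / (φ - φ')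

/-- Generalized Lucas function ⟨α⟩ = φ^α + φ'^α. -/
def genLucasFun (φ φ' α : ℝ) : ℝ := φ ^ α + φ' ^ α

def fibtorial (φ φ' : ℝ) (n : ℕ) : ℝ := ∏ j ∈ Finset.range n, genFibFun φ φ' ((j : ℝ) + 1)

def lucastorial (φ φ' : ℝ) (n : ℕ) : ℝ := ∏ j ∈ Finset.range n, genLucasFun φ φ' ((j : ℝ) + 1)

/-- L_m(s,t) = (−t)^{−m²/2}·4^m / (⟨m⟩! · ∏_{j=0}^{m−1} (φ^{j+1/2} + φ'^{j+1/2})). -/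
def Lfun (t φ φ' : ℝ) (m : ℕ) : ℝ :=
  (-t) ^ (-(m ^ 2 : ℝ) / 2) * 4 ^ m /
    (lucastorial φ φ' m * ∏ j ∈ Finset.range m, (φ ^ ((j : ℝ) + 1 / 2) + φ' ^ ((j : ℝ) + 1 / 2)))

/-- Generalized fibonomial {α choose n} = {α}{α−1}⋯{α−n+1}/{n}!. -/
def genFibonomial (φ φ' α : ℝ) (n : ℕ) : ℝ :=
  (∏ j ∈ Finset.range n, genFibFun φ φ' (α - j)) / fibtorial φ φ' n

/-- Central fibonomial coefficient {2n choose n}. -/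
def centralFibonomial (φ φ' : ℝ) (n : ℕ) : ℝ :=
  fibtorial φ φ' (2 * n) / (fibtorial φ φ' n * fibtorial φ φ' n)

/-!
Writing m = n - 1, reflection {-α} = -(φφ')^{-α} {α} turns the numerator
{1/2}{-1/2}⋯{1/2-m} of the generalized fibonomial into
{1/2} (-1)^m (-t)^{-m²/2} ∏_{j<m} {j+1/2}. Duplication {2α} = {α}⟨α⟩ gives
{j+1/2}(φ^{j+1/2} + φ'^{j+1/2}) = {2j+1}, and, splitting {2n}! into odd and even factors,
{2n}! = ∏_{j<n} {2j+1} · {n}! ⟨n⟩!. What remains is bookkeeping with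
{2n}! = {2m}! {2n-1} {n} ⟨n⟩.
-/

open Finset

section Identities

variable {φ φ' : ℝ}

lemma genFibFun_pos (hφ' : 0 < φ') (hlt : φ' < φ) {α : ℝ} (hα : 0 < α) :
    0 < genFibFun φ φ' α :=
  div_pos (sub_pos.2 (rpow_lt_rpow hφ'.le hlt hα)) (sub_pos.2 hlt)

lemma genLucasFun_pos (hφ : 0 < φ) (hφ' : 0 < φ') (α : ℝ) : 0 < genLucasFun φ φ' α :=
  add_pos (rpow_pos_of_pos hφ α) (rpow_pos_of_pos hφ' α)

lemma fibtorial_pos (hφ' : 0 < φ') (hlt : φ' < φ) (n : ℕ) : 0 < fibtorial φ φ' n :=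
  prod_pos fun _ _ ↦ genFibFun_pos hφ' hlt (by positivity)

lemma fibtorial_succ (n : ℕ) :
    fibtorial φ φ' (n + 1) = fibtorial φ φ' n * genFibFun φ φ' (n + 1) := by
  rw [fibtorial, prod_range_succ, fibtorial]

lemma lucastorial_pos (hφ : 0 < φ) (hφ' : 0 < φ') (n : ℕ) : 0 < lucastorial φ φ' n :=
  prod_pos fun _ _ ↦ genLucasFun_pos hφ hφ' _

lemma genFibFun_neg (hφ : 0 < φ) (hφ' : 0 < φ') (α : ℝ) :
    genFibFun φ φ' (-α) = -(φ * φ') ^ (-α) * genFibFun φ φ' α := by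
  have h : φ ^ α ≠ 0 := (rpow_pos_of_pos hφ α).ne'
  have h' : φ' ^ α ≠ 0 := (rpow_pos_of_pos hφ' α).ne'
  unfold genFibFun
  rw [rpow_neg hφ.le, rpow_neg hφ'.le, rpow_neg (mul_pos hφ hφ').le, mul_rpow hφ.le hφ'.le]
  field_simp
  ring

lemma genFibFun_two_mul (hφ : 0 < φ) (hφ' : 0 < φ') (α : ℝ) :
    genFibFun φ φ' (2 * α) = genFibFun φ φ' α * genLucasFun φ φ' α := by
  unfold genFibFun genLucasFun
  rw [two_mul, rpow_add hφ, rpow_add hφ', div_mul_eq_mul_div]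
  ring

lemma fibtorial_two_mul (hφ : 0 < φ) (hφ' : 0 < φ') (n : ℕ) :
    fibtorial φ φ' (2 * n) =
      (∏ j ∈ range n, genFibFun φ φ' (2 * j + 1)) * fibtorial φ φ' n * lucastorial φ φ' n := by
  induction n with
  | zero => simp [fibtorial, lucastorial]
  | succ n ih =>
    have hodd : ((2 * n : ℕ) : ℝ) + 1 = 2 * n + 1 := by push_cast; ring
    have heven : ((2 * n + 1 : ℕ) : ℝ) + 1 = 2 * ((n : ℝ) + 1) := by push_cast; ring
    unfold fibtorial lucastorial at *
    rw [show 2 * (n + 1) = 2 * n + 1 + 1 by ring, prod_range_succ, prod_range_succ, ih, hodd,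
      heven, genFibFun_two_mul hφ hφ', prod_range_succ, prod_range_succ, prod_range_succ]
    ring

lemma fibtorial_two_mul_add_two (hφ : 0 < φ) (hφ' : 0 < φ') (n : ℕ) :
    fibtorial φ φ' (2 * (n + 1)) = fibtorial φ φ' (2 * n) * genFibFun φ φ' (2 * n + 1) *
      genFibFun φ φ' (n + 1) * genLucasFun φ φ' (n + 1) := by
  rw [show 2 * (n + 1) = 2 * n + 1 + 1 by ring, fibtorial_succ, fibtorial_succ,
    mul_assoc _ _ (genLucasFun _ _ _), ← genFibFun_two_mul hφ hφ']
  push_cast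
  ring_nf

lemma genFibFun_add_half_mul_genLucasFun (hφ : 0 < φ) (hφ' : 0 < φ') (m : ℕ) :
    (∏ j ∈ range m, genFibFun φ φ' (j + 1 / 2)) * ∏ j ∈ range m, genLucasFun φ φ' (j + 1 / 2) =
      ∏ j ∈ range m, genFibFun φ φ' (2 * j + 1) := by
  rw [← prod_mul_distrib]
  refine prod_congr rfl fun j _ ↦ ?_
  rw [← genFibFun_two_mul hφ hφ']
  ring_nf

lemma sum_range_add_half (m : ℕ) : ∑ j ∈ range m, ((j : ℝ) + 1 / 2) = (m : ℝ) ^ 2 / 2 := by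
  induction m with
  | zero => simp
  | succ m ih => rw [sum_range_succ, ih]; push_cast; ring

lemma prod_genFibFun_half_sub (hφ : 0 < φ) (hφ' : 0 < φ') (m : ℕ) :
    ∏ j ∈ range (m + 1), genFibFun φ φ' (1 / 2 - j) =
      genFibFun φ φ' (1 / 2) * (-1) ^ m * (φ * φ') ^ (-(m : ℝ) ^ 2 / 2) *
        ∏ j ∈ range m, genFibFun φ φ' (j + 1 / 2) := by
  have hreflect : ∀ j ∈ range m, genFibFun φ φ' (1 / 2 - ((j + 1 : ℕ) : ℝ)) =
      -1 * ((φ * φ') ^ (-((j : ℝ) + 1 / 2)) * genFibFun φ φ' (j + 1 / 2)) := fun j _ ↦ by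
    rw [show (1 / 2 : ℝ) - ((j + 1 : ℕ) : ℝ) = -((j : ℝ) + 1 / 2) by push_cast; ring,
      genFibFun_neg hφ hφ']
    ring
  have hexp : -(m : ℝ) ^ 2 / 2 = ∑ j ∈ range m, -((j : ℝ) + 1 / 2) := by
    rw [sum_neg_distrib, sum_range_add_half]; ring
  rw [prod_range_succ', prod_congr rfl hreflect, prod_mul_distrib, prod_mul_distrib, prod_const,
    card_range, hexp, rpow_sum_of_pos (mul_pos hφ hφ')]
  norm_num
  ring

lemma genFibonomial_half_succ (hφ' : 0 < φ') (hlt : φ' < φ) (m : ℕ) :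
    genFibonomial φ φ' (1 / 2) (m + 1) =
      genFibFun φ φ' (1 / 2) * (-1) ^ m * (φ * φ') ^ (-(m : ℝ) ^ 2 / 2) * fibtorial φ φ' (2 * m) /
        (fibtorial φ φ' m * lucastorial φ φ' m * (∏ j ∈ range m, genLucasFun φ φ' (j + 1 / 2)) *
          fibtorial φ φ' (m + 1)) := by
  have hφ : 0 < φ := hφ'.trans hlt
  have hfib := (fibtorial_pos hφ' hlt m).ne'
  have hluc := (lucastorial_pos hφ hφ' m).ne'
  have hprod : ∏ j ∈ range m, genLucasFun φ φ' (j + 1 / 2) ≠ 0 :=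
    (prod_pos fun _ _ ↦ genLucasFun_pos hφ hφ' _).ne'
  rw [genFibonomial, prod_genFibFun_half_sub hφ hφ', fibtorial_two_mul hφ hφ',
    ← genFibFun_add_half_mul_genLucasFun hφ hφ']
  generalize ∏ j ∈ range m, genLucasFun φ φ' (j + 1 / 2) = P at hprod ⊢
  field_simp

end Identities

theorem genFibonomial_half (s t : ℝ) (hs : 0 < s) (ht : t < 0)
    (hdisc : s ^ 2 + 4 * t > 0) (φ φ' : ℝ)
    (hφ : φ = (s + Real.sqrt (s ^ 2 + 4 * t)) / 2)
    (hφ' : φ' = (s - Real.sqrt (s ^ 2 + 4 * t)) / 2)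
    (n : ℕ) (hn : 1 ≤ n) :
    genFibonomial φ φ' (1 / 2) n =
      genFibFun φ φ' (1 / 2) * centralFibonomial φ φ' n *
        ((-1 : ℝ) ^ (n + 1) /
          (4 ^ (n - 1) * genLucasFun φ φ' n * genFibFun φ φ' ((2 * n - 1 : ℕ) : ℝ))) *
        Lfun t φ φ' (n - 1) := by
  obtain ⟨m, rfl⟩ : ∃ m, n = m + 1 := ⟨n - 1, by omega⟩
  have hr : 0 < √(s ^ 2 + 4 * t) := sqrt_pos.2 hdisc
  have hr2 : √(s ^ 2 + 4 * t) ^ 2 = s ^ 2 + 4 * t := sq_sqrt hdisc.le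
  have hpos' : 0 < φ' := by rw [hφ']; nlinarith
  have hlt : φ' < φ := by rw [hφ, hφ']; linarith
  have hpos : 0 < φ := hpos'.trans hlt
  have hmul : φ * φ' = -t := by rw [hφ, hφ']; linear_combination (-1 / 4 : ℝ) * hr2
  have hodd : ((2 * (m + 1) - 1 : ℕ) : ℝ) = 2 * m + 1 := by
    rw [show 2 * (m + 1) - 1 = 2 * m + 1 by omega]; push_cast; ring
  have hG := (genFibFun_pos hpos' hlt (show (0 : ℝ) < 2 * m + 1 by positivity)).ne'
  have hF := (genFibFun_pos hpos' hlt (show (0 : ℝ) < m + 1 by positivity)).ne'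
  have hL := (genLucasFun_pos hpos hpos' ((m : ℝ) + 1)).ne'
  rw [genFibonomial_half_succ hpos' hlt, hmul, centralFibonomial,
    fibtorial_two_mul_add_two hpos hpos', fibtorial_succ, hodd, Nat.add_sub_cancel, Lfun]
  simp only [genLucasFun] at hL ⊢
  push_cast
  field_simp
  ring
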